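/- Let A be a commutative ring and T_1, …, T_n ∈ A. Let R = A[Y_0, …, Y_{n-1}] be the polynomial ring, consider R[[Q_1, …, Q_{n-1}]] with the convention Q_0 = 0, and let J_Q ⊆ R[[Q]] be the ideal generated by the coefficients of y, y^2, …, y^n in ∏_{ℓ=1}^{n}(1 + y T_ℓ) − D(1 + y Y_0/(1−Q_0), …, 1 + y Y_{n-1}/(1−Q_{n-1}); y Y_1 Q_1/(1−Q_1), …, y Y_{n-1} Q_{n-1}/(1−Q_{n-1})). Then ∏_{j=0}^{n-1} Y_j ≡ (T_1⋯T_n) · ∏_{j=1}^{n-1}(1 − Q_j) modulo J_Q. In particular, if T_1⋯T_n is a unit of A, then the image of each Y_j in R[[Q]]/J_Q is a unit. -/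

import Mathlib

/-!
Every entry of the Toda matrix has degree at most one in `y`, so the coefficient of `y^n` in its
determinant is the determinant of the matrix of `y`-coefficients. That matrix is upper triangular
(the subdiagonal entries `1` do not involve `y`) with diagonal `Y_j/(1 - Q_j)`, so the `y^n`
coefficient of the Toda relation is `T_1 ⋯ T_n - ∏ Y_j/(1 - Q_j)`. Multiplying it by the unit
`∏ (1 - Q_j)` gives the congruence; if `T_1 ⋯ T_n` is a unit, the product of the `Y_j` is then a
unit modulo `J_Q`, hence so is each factor.
-/

noncomputable section

/-- The Novikov variable `Q_j` for `1 ≤ j ≤ n-1` in the power series ring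
`C[[Q_1, …, Q_{n-1}]]`, with the convention `Q_0 = 0`. -/
def Qv (C : Type*) [CommRing C] (n : ℕ) (j : ℕ) : MvPowerSeries (Fin (n - 1)) C :=
  if h : 1 ≤ j ∧ j ≤ n - 1 then MvPowerSeries.X ⟨j - 1, by omega⟩ else 0

/-- The tridiagonal determinant `D(A_0, …, A_{m-1}; B_1, …, B_{m-1})` of size `m`:
diagonal entries `A 0, …, A (m-1)`, superdiagonal entry in position `(i, i+1)`
equal to `B (i+1)`, subdiagonal entries `1`, all other entries `0`. -/
def triDet {R : Type*} [CommRing R] (m : ℕ) (A B : ℕ → R) : R :=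
  Matrix.det (Matrix.of fun i j : Fin m =>
    if (i : ℕ) = (j : ℕ) then A i
    else if (i : ℕ) + 1 = (j : ℕ) then B j
    else if (j : ℕ) + 1 = (i : ℕ) then 1
    else 0)

/-- The variable `Y_j` of the polynomial ring `A[Y_0, …, Y_{n-1}]`, for `0 ≤ j < n`. -/
def Ymon (A : Type*) [CommRing A] (n : ℕ) (j : ℕ) : MvPolynomial (Fin n) A :=
  if h : j < n then MvPolynomial.X ⟨j, h⟩ else 0

/-- The diagonal entry `1 + y · Y_j/(1 - Q_j)` of the Toda determinant (`Q_0 = 0`). -/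
def ytodaA (A : Type*) [CommRing A] (n : ℕ) (j : ℕ) :
    Polynomial (MvPowerSeries (Fin (n - 1)) (MvPolynomial (Fin n) A)) :=
  1 + Polynomial.C (MvPowerSeries.C (Ymon A n j) *
        Ring.inverse (1 - Qv _ n j)) * Polynomial.X

/-- The superdiagonal entry `y · Y_j · Q_j/(1 - Q_j)` of the Toda determinant. -/
def ytodaB (A : Type*) [CommRing A] (n : ℕ) (j : ℕ) :
    Polynomial (MvPowerSeries (Fin (n - 1)) (MvPolynomial (Fin n) A)) :=
  Polynomial.C (MvPowerSeries.C (Ymon A n j) * Qv _ n j *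
      Ring.inverse (1 - Qv _ n j)) * Polynomial.X

/-- `∏_{ℓ=1}^{n} (1 + y T_ℓ) - D(1 + y Y_0/(1-Q_0), …, 1 + y Y_{n-1}/(1-Q_{n-1});
y Y_1 Q_1/(1-Q_1), …, y Y_{n-1} Q_{n-1}/(1-Q_{n-1}))`. -/
def ytodaRel (A : Type*) [CommRing A] (n : ℕ) (T : Fin n → A) :
    Polynomial (MvPowerSeries (Fin (n - 1)) (MvPolynomial (Fin n) A)) :=
  (∏ ℓ : Fin n,
      (1 + Polynomial.C (MvPowerSeries.C
            (algebraMap A (MvPolynomial (Fin n) A) (T ℓ))) * Polynomial.X))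
    - triDet n (ytodaA A n) (ytodaB A n)

/-- The ideal `J_Q ⊆ R[[Q]]` generated by the coefficients of `y, y^2, …, y^n`
in the Toda relation. -/
def ytodaIdeal (A : Type*) [CommRing A] (n : ℕ) (T : Fin n → A) :
    Ideal (MvPowerSeries (Fin (n - 1)) (MvPolynomial (Fin n) A)) :=
  Ideal.span {x | ∃ i : ℕ, 1 ≤ i ∧ i ≤ n ∧ x = (ytodaRel A n T).coeff i}

open Polynomial

theorem Matrix.coeff_det_of_natDegree_le_one {R ι : Type*} [CommRing R] [Fintype ι]
    [DecidableEq ι] (M : Matrix ι ι R[X]) (hM : ∀ i j, (M i j).natDegree ≤ 1) :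
    M.det.coeff (Fintype.card ι) = (M.map (coeff · 1)).det := by
  have hsplit : (X : R[X]) • (M.map (coeff · 1)).map C + (M.map (coeff · 0)).map C = M := by
    ext i j : 1
    simp only [Matrix.add_apply, Matrix.smul_apply, Matrix.map_apply, smul_eq_mul, mul_comm X]
    exact (eq_X_add_C_of_natDegree_le_one (hM i j)).symm
  rw [← coeff_det_X_add_C_card _ (M.map (coeff · 0)), hsplit]

theorem triDet_coeff_self {R : Type*} [CommRing R] (m : ℕ) (a b : ℕ → R[X])
    (ha : ∀ i, (a i).natDegree ≤ 1) (hb : ∀ i, (b i).natDegree ≤ 1) :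
    (triDet m a b).coeff m = ∏ i ∈ Finset.range m, (a i).coeff 1 := by
  have hcoeff := Matrix.coeff_det_of_natDegree_le_one (Matrix.of fun i j : Fin m =>
    if (i : ℕ) = j then a i else if (i : ℕ) + 1 = j then b j
    else if (j : ℕ) + 1 = i then 1 else 0) fun i j => by
      simp only [Matrix.of_apply]
      split_ifs <;> simp [ha, hb]
  rw [Fintype.card_fin] at hcoeff
  rw [triDet, hcoeff, Matrix.det_of_isUpperTriangular, ← Fin.prod_univ_eq_prod_range]
  · simp
  intro i j hji
  have hne : (i : ℕ) ≠ j ∧ (i : ℕ) + 1 ≠ j := by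
    have : (j : ℕ) < i := hji
    omega
  simp only [Matrix.map_apply, Matrix.of_apply, hne, if_false]
  split_ifs <;> simp [coeff_one]

theorem Finset.prod_range_eq_prod_Icc_of_eq_one {M : Type*} [CommMonoid M] (f : ℕ → M)
    (h0 : f 0 = 1) (n : ℕ) : ∏ j ∈ range n, f j = ∏ j ∈ Icc 1 (n - 1), f j := by
  rcases n with _ | k
  · rfl
  rw [prod_range_eq_mul_Ico f (by omega), h0, one_mul, Nat.add_sub_cancel,
    ← Ico_add_one_right_eq_Icc]

section Qv

variable (C : Type*) [CommRing C] (n : ℕ)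

theorem isUnit_one_sub_Qv (j : ℕ) : IsUnit (1 - Qv C n j) := by
  rw [MvPowerSeries.isUnit_iff_constantCoeff, Qv]
  split_ifs <;> simp

theorem prod_range_one_sub_Qv :
    ∏ j ∈ Finset.range n, (1 - Qv C n j) = ∏ j ∈ Finset.Icc 1 (n - 1), (1 - Qv C n j) :=
  Finset.prod_range_eq_prod_Icc_of_eq_one _ (by simp [Qv]) n

end Qv

theorem Ideal.isUnit_mk_of_prod_sub_mem {R ι : Type*} [CommRing R] {I : Ideal R}
    {s : Finset ι} {y : ι → R} {u : R} (hu : IsUnit u) (h : ∏ i ∈ s, y i - u ∈ I) {j : ι}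
    (hj : j ∈ s) : IsUnit (Ideal.Quotient.mk I (y j)) := by
  have hprod : IsUnit (Ideal.Quotient.mk I (∏ i ∈ s, y i)) := by
    rw [Ideal.Quotient.eq.mpr h]
    exact hu.map _
  rw [map_prod] at hprod
  exact isUnit_of_dvd_unit (Finset.dvd_prod_of_mem (fun i => Ideal.Quotient.mk I (y i)) hj) hprod

section Toda

variable (A : Type*) [CommRing A] (n : ℕ) (T : Fin n → A)

theorem ytodaRel_coeff_self :
    (ytodaRel A n T).coeff n =
      MvPowerSeries.C (algebraMap A (MvPolynomial (Fin n) A) (∏ ℓ, T ℓ)) -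
        ∏ j ∈ Finset.range n,
          MvPowerSeries.C (Ymon A n j) * Ring.inverse (1 - Qv (MvPolynomial (Fin n) A) n j) := by
  have hprod := coeff_prod_of_natDegree_le (s := Finset.univ)
    (fun ℓ : Fin n => 1 + Polynomial.C (MvPowerSeries.C (σ := Fin (n - 1))
      (algebraMap A (MvPolynomial (Fin n) A) (T ℓ))) * X) 1
    (fun ℓ _ => by compute_degree)
  simp only [Finset.card_univ, Fintype.card_fin, mul_one] at hprod
  rw [ytodaRel, coeff_sub, hprod,
    triDet_coeff_self n _ _ (fun _ => by rw [ytodaA]; compute_degree)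
      (fun _ => by rw [ytodaB]; compute_degree)]
  simp [ytodaA, coeff_one]

theorem ytodaRel_coeff_self_mem : (ytodaRel A n T).coeff n ∈ ytodaIdeal A n T := by
  rcases n.eq_zero_or_pos with rfl | hn
  · rw [ytodaRel_coeff_self]
    simp
  · exact Ideal.subset_span ⟨n, hn, le_rfl, rfl⟩

theorem prod_C_Ymon_sub_mem_ytodaIdeal :
    ∏ j ∈ Finset.range n, MvPowerSeries.C (Ymon A n j) -
      MvPowerSeries.C (algebraMap A _ (∏ ℓ, T ℓ)) *
        ∏ j ∈ Finset.Icc 1 (n - 1), (1 - Qv (MvPolynomial (Fin n) A) n j) ∈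
      ytodaIdeal A n T := by
  set P := ∏ j ∈ Finset.range n, (1 - Qv (MvPolynomial (Fin n) A) n j)
  have hclear : ∏ j ∈ Finset.range n, MvPowerSeries.C (Ymon A n j) = P *
      ∏ j ∈ Finset.range n,
        MvPowerSeries.C (Ymon A n j) * Ring.inverse (1 - Qv (MvPolynomial (Fin n) A) n j) := by
    rw [← Finset.prod_mul_distrib]
    refine Finset.prod_congr rfl fun j _ => ?_
    rw [mul_left_comm, Ring.mul_inverse_cancel _ (isUnit_one_sub_Qv _ n j), mul_one]
  have hcongr : ∏ j ∈ Finset.range n, MvPowerSeries.C (Ymon A n j) -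
      MvPowerSeries.C (algebraMap A _ (∏ ℓ, T ℓ)) * P = -P * (ytodaRel A n T).coeff n := by
    rw [ytodaRel_coeff_self, hclear]
    ring
  rw [← prod_range_one_sub_Qv, hcongr]
  exact Ideal.mul_mem_left _ _ (ytodaRel_coeff_self_mem A n T)

end Toda

/-- In the Toda presentation `R[[Q]]/J_Q` of `QK_T(Fl(n))` one has
`∏_{j=0}^{n-1} Y_j ≡ (T_1 ⋯ T_n) · ∏_{j=1}^{n-1} (1 - Q_j)` modulo `J_Q`;
in particular, if `T_1 ⋯ T_n` is a unit of `A`, then the image of each `Y_j`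
in `R[[Q]]/J_Q` is a unit. -/
theorem prod_Y_eq_prod_T_mod_todaIdeal (A : Type*) [CommRing A] (n : ℕ)
    (T : Fin n → A) :
    ((∏ j ∈ Finset.range n, MvPowerSeries.C (Ymon A n j))
        - MvPowerSeries.C (σ := Fin (n - 1)) (R := MvPolynomial (Fin n) A)
            (algebraMap A (MvPolynomial (Fin n) A) (∏ ℓ : Fin n, T ℓ)) *
          ∏ j ∈ Finset.Icc 1 (n - 1), (1 - Qv (MvPolynomial (Fin n) A) n j)
      ∈ ytodaIdeal A n T) ∧
    (IsUnit (∏ ℓ : Fin n, T ℓ) → ∀ j : ℕ, j < n →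
      IsUnit (Ideal.Quotient.mk (ytodaIdeal A n T)
        (MvPowerSeries.C (Ymon A n j)))) := by
  have hmem := prod_C_Ymon_sub_mem_ytodaIdeal A n T
  refine ⟨hmem, fun hT j hj => Ideal.isUnit_mk_of_prod_sub_mem ?_ hmem (Finset.mem_range.2 hj)⟩
  exact ((hT.map _).map _).mul (IsUnit.prod_iff.2 fun j _ => isUnit_one_sub_Qv _ n j)
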